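/- Let Γ be a groupoid and R an object unital Γ-graded ring. The following are equivalent: (1) R is a Γ-graded division ring; (2) R_R is a Γ₀-simple right R-module, i.e. R(e) is a gr-simple right R-module for every e ∈ Γ'₀(R); (3) R is right gr-semisimple and R_e is a division ring for every e ∈ Γ'₀(R); (4) there exists a family {R_j}_{j∈J} of gr-prime Γ-graded division rings with supp(R_j) ∩ supp(R_{j'}) = ∅ for all distinct j, j' ∈ J such that R = ⊕_{j∈J} R_j (as Γ-graded rings). -/

import Mathlib

set_option autoImplicit false

noncomputable section

universe u v w x y

/-- A groupoid structure on its set `Γ` of morphisms.  Objects are identified with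
the identity morphisms: `src γ` and `tgt γ` are the source and target identities
(`d(γ)` and `r(γ)`), and `comp γ δ h` is the composite `γδ`, which is defined
exactly when `src γ = tgt δ`. -/
structure Gpd (Γ : Type u) where
  src : Γ → Γ
  tgt : Γ → Γ
  inv : Γ → Γ
  comp : (γ δ : Γ) → src γ = tgt δ → Γ
  src_src : ∀ γ, src (src γ) = src γ
  tgt_src : ∀ γ, tgt (src γ) = src γ
  src_tgt : ∀ γ, src (tgt γ) = tgt γ
  tgt_tgt : ∀ γ, tgt (tgt γ) = tgt γ
  src_comp : ∀ γ δ (h : src γ = tgt δ), src (comp γ δ h) = src δ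
  tgt_comp : ∀ γ δ (h : src γ = tgt δ), tgt (comp γ δ h) = tgt γ
  comp_id : ∀ γ, comp γ (src γ) (tgt_src γ).symm = γ
  id_comp : ∀ γ, comp (tgt γ) γ (src_tgt γ) = γ
  comp_assoc : ∀ γ δ ε (h₁ : src γ = tgt δ) (h₂ : src δ = tgt ε),
    comp (comp γ δ h₁) ε ((src_comp γ δ h₁).trans h₂)
      = comp γ (comp δ ε h₂) (h₁.trans (tgt_comp δ ε h₂).symm)
  src_inv : ∀ γ, src (inv γ) = tgt γ
  tgt_inv : ∀ γ, tgt (inv γ) = src γ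
  inv_inv : ∀ γ, inv (inv γ) = γ
  comp_inv : ∀ γ, comp γ (inv γ) (tgt_inv γ).symm = tgt γ
  inv_comp : ∀ γ, comp (inv γ) γ (src_inv γ) = src γ

namespace Gpd

variable {Γ : Type u} (G : Gpd Γ)

/-- `e` is an object of the groupoid, i.e. an identity morphism. -/
def IsObj (e : Γ) : Prop := G.src e = e

open scoped Classical in
/-- Partial composition: `some (γδ)` when defined, `none` otherwise. -/
def mul? (γ δ : Γ) : Option Γ :=
  if h : G.src γ = G.tgt δ then some (G.comp γ δ h) else none

/-- The partial triple product `σ γ τ⁻¹`, `none` when undefined. -/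
def conj? (σ γ τ : Γ) : Option Γ :=
  (G.mul? σ γ).bind fun η => G.mul? η (G.inv τ)

end Gpd

/-- An object unital `Γ`-graded ring structure on the (possibly non-unital) ring `R`:
a decomposition `R = ⊕ R_γ` with `R_γ R_δ ⊆ R_{γδ}` (zero when `γδ` is undefined),
together with local units `1_e ∈ R_e` for the objects `e` such that
`1_{r(γ)} a = a 1_{d(γ)} = a` for homogeneous `a` of degree `γ`. -/
structure GammaRing {Γ : Type u} (G : Gpd Γ) (R : Type v) [NonUnitalRing R] where
  grade : Γ → AddSubgroup R
  grade_iSup : (⨆ γ : Γ, grade γ) = ⊤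
  grade_indep : ∀ γ : Γ, grade γ ⊓ (⨆ (δ : Γ) (_ : δ ≠ γ), grade δ) = ⊥
  mul_mem : ∀ (γ δ : Γ) (h : G.src γ = G.tgt δ) (a b : R),
    a ∈ grade γ → b ∈ grade δ → a * b ∈ grade (G.comp γ δ h)
  mul_ne : ∀ (γ δ : Γ), G.src γ ≠ G.tgt δ → ∀ (a b : R),
    a ∈ grade γ → b ∈ grade δ → a * b = 0
  one : Γ → R
  one_mem : ∀ e : Γ, G.IsObj e → one e ∈ grade e
  one_mul' : ∀ (γ : Γ) (a : R), a ∈ grade γ → one (G.tgt γ) * a = a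
  mul_one' : ∀ (γ : Γ) (a : R), a ∈ grade γ → a * one (G.src γ) = a

/-- A (unital) `Γ`-graded right module over the object unital `Γ`-graded ring `RG`. -/
structure GammaMod {Γ : Type u} {G : Gpd Γ} {R : Type v} [NonUnitalRing R]
    (RG : GammaRing G R) (M : Type w) [AddCommGroup M] where
  smul : M → R → M
  smul_add : ∀ (m : M) (a b : R), smul m (a + b) = smul m a + smul m b
  add_smul : ∀ (m n : M) (a : R), smul (m + n) a = smul m a + smul n a
  smul_mul : ∀ (m : M) (a b : R), smul m (a * b) = smul (smul m a) b
  grade : Γ → AddSubgroup M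
  grade_iSup : (⨆ γ : Γ, grade γ) = ⊤
  grade_indep : ∀ γ : Γ, grade γ ⊓ (⨆ (δ : Γ) (_ : δ ≠ γ), grade δ) = ⊥
  smul_mem : ∀ (σ τ : Γ) (h : G.src σ = G.tgt τ) (m : M) (a : R),
    m ∈ grade σ → a ∈ RG.grade τ → smul m a ∈ grade (G.comp σ τ h)
  smul_ne : ∀ (σ τ : Γ), G.src σ ≠ G.tgt τ → ∀ (m : M) (a : R),
    m ∈ grade σ → a ∈ RG.grade τ → smul m a = 0
  smul_one : ∀ (σ : Γ) (m : M), m ∈ grade σ → smul m (RG.one (G.src σ)) = m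

/-- A (unital) `Γ`-graded left module over the object unital `Γ`-graded ring `RG`. -/
structure GammaLMod {Γ : Type u} {G : Gpd Γ} {R : Type v} [NonUnitalRing R]
    (RG : GammaRing G R) (M : Type w) [AddCommGroup M] where
  smul : R → M → M
  smul_add : ∀ (a : R) (m n : M), smul a (m + n) = smul a m + smul a n
  add_smul : ∀ (a b : R) (m : M), smul (a + b) m = smul a m + smul b m
  mul_smul : ∀ (a b : R) (m : M), smul (a * b) m = smul a (smul b m)
  grade : Γ → AddSubgroup M
  grade_iSup : (⨆ γ : Γ, grade γ) = ⊤
  grade_indep : ∀ γ : Γ, grade γ ⊓ (⨆ (δ : Γ) (_ : δ ≠ γ), grade δ) = ⊥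
  smul_mem : ∀ (τ σ : Γ) (h : G.src τ = G.tgt σ) (a : R) (m : M),
    a ∈ RG.grade τ → m ∈ grade σ → smul a m ∈ grade (G.comp τ σ h)
  smul_ne : ∀ (τ σ : Γ), G.src τ ≠ G.tgt σ → ∀ (a : R) (m : M),
    a ∈ RG.grade τ → m ∈ grade σ → smul a m = 0
  one_smul : ∀ (σ : Γ) (m : M), m ∈ grade σ → smul (RG.one (G.tgt σ)) m = m

namespace GammaMod

variable {Γ : Type u} {G : Gpd Γ} {R : Type v} [NonUnitalRing R] {RG : GammaRing G R}
  {M : Type w} [AddCommGroup M] (Mod : GammaMod RG M)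

/-- `shiftGrade σ γ` is the homogeneous component `M_{σγ}` (zero when undefined):
the degree-`γ` component of the shifted module `M(σ)`. -/
def shiftGrade (σ γ : Γ) : AddSubgroup M := (G.mul? σ γ).elim ⊥ Mod.grade

/-- `N` is a graded submodule of `M`. -/
def IsGradedSub (N : AddSubgroup M) : Prop :=
  (∀ m ∈ N, ∀ a : R, Mod.smul m a ∈ N) ∧ N ≤ ⨆ γ : Γ, (Mod.grade γ ⊓ N)

/-- `N` is a gr-simple graded submodule of `M`. -/
def IsGrSimpleSub (N : AddSubgroup M) : Prop :=
  Mod.IsGradedSub N ∧ N ≠ ⊥ ∧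
    ∀ P : AddSubgroup M, Mod.IsGradedSub P → P ≤ N → P = ⊥ ∨ P = N

/-- `M` is a gr-simple graded module. -/
def IsGrSimple : Prop := Mod.IsGrSimpleSub ⊤

/-- `M` is a gr-semisimple graded module: it is the sum of its gr-simple graded
submodules. -/
def IsGrSemisimple : Prop :=
  (⨆ (N : AddSubgroup M) (_ : Mod.IsGrSimpleSub N), N) = ⊤

/-- The submodule `M(e) = ⊕_{r(γ) = e} M_γ`. -/
def eComp (e : Γ) : AddSubgroup M := ⨆ (γ : Γ) (_ : G.tgt γ = e), Mod.grade γ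

/-- `M` is `Γ₀`-artinian: each `M(e)` satisfies the descending chain condition on
graded submodules. -/
def IsGamma0Artinian : Prop :=
  ∀ e : Γ, G.IsObj e → ∀ f : ℕ → AddSubgroup M,
    (∀ n, Mod.IsGradedSub (f n) ∧ f n ≤ Mod.eComp e) →
    (∀ n, f (n + 1) ≤ f n) → ∃ n, ∀ k, n ≤ k → f k = f n

/-- `M` is a (nonzero) `Γ₀`-simple module: `M(e)` is gr-simple for every `e ∈ Γ'₀(M)`. -/
def IsGamma0Simple : Prop :=
  (∃ m : M, m ≠ 0) ∧
    ∀ e : Γ, G.IsObj e → Mod.eComp e ≠ ⊥ → Mod.IsGrSimpleSub (Mod.eComp e)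

theorem isGradedSub_top : Mod.IsGradedSub (⊤ : AddSubgroup M) := by
  constructor
  · intro m _ a
    exact AddSubgroup.mem_top _
  · have h : (⨆ γ : Γ, (Mod.grade γ ⊓ (⊤ : AddSubgroup M))) = (⊤ : AddSubgroup M) := by
      simp [Mod.grade_iSup]
    rw [h]

/-- `HomGrade γ` is the homogeneous component `HOM_R(M,M)_γ` of the graded
endomorphism ring `END_R(M)`: the `R`-linear additive endomorphisms `g` with
`g(M_σ) ⊆ M_{γσ}` for all `σ`. -/
def HomGrade (γ : Γ) : Set (M →+ M) :=
  {g | (∀ (m : M) (a : R), g (Mod.smul m a) = Mod.smul (g m) a) ∧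
       ∀ (σ : Γ) (m : M), m ∈ Mod.grade σ → g m ∈ Mod.shiftGrade γ σ}

/-- The graded submodule `N` of `M` is gr-isomorphic to a shift of the graded
submodule `N'` of `M₂`: there are `σ ∈ Γ` and a gr-isomorphism `N ≅ N'(σ)`. -/
def SubIso {M₂ : Type x} [AddCommGroup M₂] (Mod₂ : GammaMod RG M₂)
    (N : AddSubgroup M) (N' : AddSubgroup M₂) (hN : Mod.IsGradedSub N) : Prop :=
  ∃ (σ : Γ) (ψ : N ≃+ N'),
    (∀ (n : N) (a : R),
      ((ψ ⟨Mod.smul n.1 a, hN.1 n.1 n.2 a⟩ : N') : M₂) = Mod₂.smul ((ψ n : N') : M₂) a) ∧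
    ∀ γ : Γ, (fun n : N => ((ψ n : N') : M₂)) '' {n : N | (n : M) ∈ Mod.grade γ}
      = {m : M₂ | m ∈ N' ∧ m ∈ Mod₂.shiftGrade σ γ}

variable {ι : Type y}

/-- A pseudo-linearly independent sequence of homogeneous elements. -/
def PseudoLI (β : ι → Γ) (v : ι → M) : Prop :=
  (∀ i, v i ∈ Mod.grade (β i) ∧ v i ≠ 0) ∧
  ∀ a : ι →₀ R, (∀ i, RG.one (G.src (β i)) * a i = a i) →
    (a.sum fun i r => Mod.smul (v i) r) = 0 → a = 0

/-- A pseudo-basis of `M`: a generating pseudo-linearly independent sequence of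
homogeneous elements. -/
def PseudoBasis (β : ι → Γ) (v : ι → M) : Prop :=
  Mod.PseudoLI β v ∧
    AddSubgroup.closure {m : M | ∃ (i : ι) (r : R), m = Mod.smul (v i) r} = ⊤

/-- `M` is pseudo-free: it has a pseudo-basis. -/
def PseudoFree : Prop :=
  ∃ (κ : Type (max u w)) (β : κ → Γ) (v : κ → M), Mod.PseudoBasis β v

end GammaMod

namespace GammaLMod

variable {Γ : Type u} {G : Gpd Γ} {R : Type v} [NonUnitalRing R] {RG : GammaRing G R}
  {M : Type w} [AddCommGroup M] (Mod : GammaLMod RG M)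

/-- `rshiftGrade σ γ` is the homogeneous component `M_{σγ}` (zero when undefined). -/
def rshiftGrade (σ γ : Γ) : AddSubgroup M := (G.mul? σ γ).elim ⊥ Mod.grade

/-- `N` is a graded left submodule of `M`. -/
def IsGradedSub (N : AddSubgroup M) : Prop :=
  (∀ m ∈ N, ∀ a : R, Mod.smul a m ∈ N) ∧ N ≤ ⨆ γ : Γ, (Mod.grade γ ⊓ N)

def IsGrSimpleSub (N : AddSubgroup M) : Prop :=
  Mod.IsGradedSub N ∧ N ≠ ⊥ ∧
    ∀ P : AddSubgroup M, Mod.IsGradedSub P → P ≤ N → P = ⊥ ∨ P = N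

def IsGrSimple : Prop := Mod.IsGrSimpleSub ⊤

def IsGrSemisimple : Prop :=
  (⨆ (N : AddSubgroup M) (_ : Mod.IsGrSimpleSub N), N) = ⊤

/-- The left submodule `(e)M = ⊕_{d(γ) = e} M_γ`. -/
def lComp (e : Γ) : AddSubgroup M := ⨆ (γ : Γ) (_ : G.src γ = e), Mod.grade γ

def IsGamma0Artinian : Prop :=
  ∀ e : Γ, G.IsObj e → ∀ f : ℕ → AddSubgroup M,
    (∀ n, Mod.IsGradedSub (f n) ∧ f n ≤ Mod.lComp e) →
    (∀ n, f (n + 1) ≤ f n) → ∃ n, ∀ k, n ≤ k → f k = f n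

/-- `V` has finite `Γ₀`-dimension: each `(e)V` has a finite pseudo-basis. -/
def FiniteGamma0Dim : Prop :=
  ∀ e : Γ, G.IsObj e → ∃ (n : ℕ) (γs : Fin n → Γ) (u : Fin n → M),
    (∀ i, G.src (γs i) = e ∧ u i ∈ Mod.grade (γs i) ∧ u i ≠ 0) ∧
    (∀ m ∈ Mod.lComp e,
      m ∈ AddSubgroup.closure {y : M | ∃ (i : Fin n) (a : R), y = Mod.smul a (u i)}) ∧
    ∀ a : Fin n → R, (∀ i, a i * RG.one (G.tgt (γs i)) = a i) →
      (∑ i, Mod.smul (a i) (u i)) = 0 → ∀ i, a i = 0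

end GammaLMod

namespace GammaRing

variable {Γ : Type u} {G : Gpd Γ} {R : Type v} [NonUnitalRing R] (RG : GammaRing G R)

/-- The (right) regular graded module `R_R`. -/
def regular : GammaMod RG R where
  smul := fun m a => m * a
  smul_add := fun m a b => mul_add m a b
  add_smul := fun m n a => add_mul m n a
  smul_mul := fun m a b => (mul_assoc m a b).symm
  grade := RG.grade
  grade_iSup := RG.grade_iSup
  grade_indep := RG.grade_indep
  smul_mem := RG.mul_mem
  smul_ne := RG.mul_ne
  smul_one := RG.mul_one'

/-- The left regular graded module `_R R`. -/
def leftRegular : GammaLMod RG R where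
  smul := fun a m => a * m
  smul_add := fun a m n => mul_add a m n
  add_smul := fun a b m => add_mul a b m
  mul_smul := fun a b m => mul_assoc a b m
  grade := RG.grade
  grade_iSup := RG.grade_iSup
  grade_indep := RG.grade_indep
  smul_mem := RG.mul_mem
  smul_ne := RG.mul_ne
  one_smul := RG.one_mul'

/-- `I` is a graded (two-sided) ideal of `R`. -/
def IsGradedIdeal (I : AddSubgroup R) : Prop :=
  (∀ a ∈ I, ∀ r : R, a * r ∈ I ∧ r * a ∈ I) ∧ I ≤ ⨆ γ : Γ, (RG.grade γ ⊓ I)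

/-- `R` is a gr-simple ring. -/
def IsGrSimpleRing : Prop :=
  (∃ a : R, a ≠ 0) ∧ ∀ I : AddSubgroup R, RG.IsGradedIdeal I → I = ⊥ ∨ I = ⊤

/-- `R` is a gr-prime ring. -/
def IsGrPrime : Prop :=
  (∃ a : R, a ≠ 0) ∧ ∀ I J : AddSubgroup R, RG.IsGradedIdeal I → RG.IsGradedIdeal J →
    I ≠ ⊥ → J ≠ ⊥ → ∃ a ∈ I, ∃ b ∈ J, a * b ≠ 0

/-- `R` is a `Γ`-graded division ring: `R ≠ 0` and every nonzero homogeneous element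
of degree `γ` has an inverse of degree `γ⁻¹`. -/
def IsGrDivision : Prop :=
  (∃ a : R, a ≠ 0) ∧ ∀ (γ : Γ) (a : R), a ∈ RG.grade γ → a ≠ 0 →
    ∃ b ∈ RG.grade (G.inv γ), a * b = RG.one (G.tgt γ) ∧ b * a = RG.one (G.src γ)

/-- `supp(R) ⊆ eΓe`. -/
def SuppLE (e : Γ) : Prop := ∀ γ : Γ, RG.grade γ ≠ ⊥ → G.src γ = e ∧ G.tgt γ = e

def IsRightGrSemisimple : Prop := RG.regular.IsGrSemisimple

def IsLeftGrSemisimple : Prop := RG.leftRegular.IsGrSemisimple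

def IsRightGamma0Artinian : Prop := RG.regular.IsGamma0Artinian

def IsLeftGamma0Artinian : Prop := RG.leftRegular.IsGamma0Artinian

/-- The component ring `R_e` is a division ring with identity `1_e`. -/
def ComponentDivisionRing (e : Γ) : Prop :=
  RG.one e ≠ 0 ∧ ∀ a ∈ RG.grade e, a ≠ 0 →
    ∃ b ∈ RG.grade e, a * b = RG.one e ∧ b * a = RG.one e

/-- The additive subgroup `N` of `R` is, with the induced structure, a gr-simple
graded ring. -/
def SubringGrSimple (N : AddSubgroup R) : Prop :=
  N ≠ ⊥ ∧ ∀ P : AddSubgroup R,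
    (P ≤ N ∧ (∀ p ∈ P, ∀ n ∈ N, p * n ∈ P ∧ n * p ∈ P) ∧
      P ≤ ⨆ γ : Γ, (RG.grade γ ⊓ P)) →
    P = ⊥ ∨ P = N

/-- The additive subgroup `N` of `R` is, with the induced structure, a gr-prime
graded ring. -/
def SubringGrPrime (N : AddSubgroup R) : Prop :=
  (∃ a ∈ N, a ≠ 0) ∧ ∀ P Q : AddSubgroup R,
    (P ≤ N ∧ (∀ p ∈ P, ∀ n ∈ N, p * n ∈ P ∧ n * p ∈ P) ∧
      P ≤ ⨆ γ : Γ, (RG.grade γ ⊓ P)) →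
    (Q ≤ N ∧ (∀ q ∈ Q, ∀ n ∈ N, q * n ∈ Q ∧ n * q ∈ Q) ∧
      Q ≤ ⨆ γ : Γ, (RG.grade γ ⊓ Q)) →
    P ≠ ⊥ → Q ≠ ⊥ → ∃ p ∈ P, ∃ q ∈ Q, p * q ≠ 0

/-- The additive subgroup `N` of `R` is, with the induced structure, a graded
division ring. -/
def SubringGrDivision (N : AddSubgroup R) : Prop :=
  (∃ a ∈ N, a ≠ 0) ∧ ∀ (γ : Γ) (a : R), a ∈ RG.grade γ → a ∈ N → a ≠ 0 →
    RG.one (G.tgt γ) ∈ N ∧ RG.one (G.src γ) ∈ N ∧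
    ∃ b ∈ RG.grade (G.inv γ), b ∈ N ∧ a * b = RG.one (G.tgt γ) ∧ b * a = RG.one (G.src γ)

/-- The additive subgroup `N` of `R` is, with the induced structure, a right
`Γ₀`-artinian graded ring. -/
def SubringRightGamma0Artinian (N : AddSubgroup R) : Prop :=
  ∀ e : Γ, G.IsObj e → ∀ f : ℕ → AddSubgroup R,
    (∀ n, f n ≤ N ⊓ RG.regular.eComp e ∧ (∀ p ∈ f n, ∀ x ∈ N, p * x ∈ f n) ∧
      f n ≤ ⨆ γ : Γ, (RG.grade γ ⊓ f n)) →
    (∀ n, f (n + 1) ≤ f n) → ∃ n, ∀ k, n ≤ k → f k = f n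

end GammaRing

/-- A bundled object unital `Γ`-graded ring. -/
structure BRing.{u', v'} {Γ : Type u'} (G : Gpd Γ) where
  carrier : Type v'
  [ring : NonUnitalRing carrier]
  str : GammaRing G carrier

attribute [instance] BRing.ring

/-- A bundled `Γ`-graded right module over `RG`. -/
structure BMod.{u', v', w'} {Γ : Type u'} {G : Gpd Γ} {R : Type v'} [NonUnitalRing R]
    (RG : GammaRing G R) where
  carrier : Type w'
  [acg : AddCommGroup carrier]
  str : GammaMod RG carrier

attribute [instance] BMod.acg

/-- Two bundled graded modules are in the same isoshift class. -/
def BModSameClass {Γ : Type u} {G : Gpd Γ} {R : Type v} [NonUnitalRing R]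
    {RG : GammaRing G R} (S T : BMod.{u, v, w} RG) : Prop :=
  S.str.SubIso T.str ⊤ ⊤ S.str.isGradedSub_top

/-- The isoshiftical component of `R` of the type of the graded module `S`:
the sum of all graded right ideals of `R` which are gr-simple and lie in the
isoshift class of `S`. -/
def GammaRing.isoComponent {Γ : Type u} {G : Gpd Γ} {R : Type v} [NonUnitalRing R]
    (RG : GammaRing G R) (S : BMod.{u, v, w} RG) : AddSubgroup R :=
  ⨆ (N : AddSubgroup R) (_ : RG.regular.IsGrSimpleSub N ∧
      ∃ hN : RG.regular.IsGradedSub N, RG.regular.SubIso S.str N ⊤ hN), N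

/-- `R` is a pseudo-free module ring: every `Γ`-graded right `R`-module is
pseudo-free. -/
def GammaRing.IsPfm.{u', v', w'} {Γ : Type u'} {G : Gpd Γ} {R : Type v'}
    [NonUnitalRing R] (RG : GammaRing G R) : Prop :=
  ∀ S : BMod.{u', v', w'} RG, S.str.PseudoFree

/-- `R` has invariant pseudo-basis number: any two pseudo-bases of a finitely
generated pseudo-free graded module have the same number of elements. -/
def GammaRing.IPBN.{u', v', w'} {Γ : Type u'} {G : Gpd Γ} {R : Type v'}
    [NonUnitalRing R] (RG : GammaRing G R) : Prop :=
  ∀ (S : BMod.{u', v', w'} RG) (m n : ℕ) (β₁ : Fin m → Γ) (v₁ : Fin m → S.carrier)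
    (β₂ : Fin n → Γ) (v₂ : Fin n → S.carrier),
    S.str.PseudoBasis β₁ v₁ → S.str.PseudoBasis β₂ v₂ → m = n

/-- A `d`-finite sequence of elements of `eΓ`. -/
def DFiniteSeq {Γ : Type u} (G : Gpd Γ) {I : Type w} (e : Γ) (σ : I → Γ) : Prop :=
  (∀ i, G.tgt (σ i) = e) ∧ ∀ f : Γ, {i : I | G.src (σ i) = f}.Finite

/-- The degree-`γ` constraint on the `(i,j)` entry of a homogeneous matrix:
the component `D_{σ_i γ σ_j⁻¹}` (zero when the product is undefined). -/
def entryGrade {Γ : Type u} (G : Gpd Γ) {D : Type v} [NonUnitalRing D]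
    (DG : GammaRing G D) {I : Type w} (σ : I → Γ) (γ : Γ) (i j : I) : AddSubgroup D :=
  (G.conj? (σ i) γ (σ j)).elim ⊥ DG.grade

/-- The `(i,j)` entry of the product of two finitely supported matrices. -/
def matMulEntry {I : Type w} {D : Type v} [NonUnitalRing D]
    (A B : I →₀ I →₀ D) (i j : I) : D :=
  (A i).sum fun k a => a * B k j

/-- `R` is gr-isomorphic to the graded matrix ring `M_I(D)(σ̄)`: there is an
injective additive map from `R` to the finitely supported `I×I` matrices over `D`
which respects matrix multiplication and maps the homogeneous component `R_γ` onto
the set of homogeneous matrices of degree `γ`. -/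
def GammaRing.GrRepMatrix {Γ : Type u} {G : Gpd Γ} {R : Type v} {D : Type x}
    [NonUnitalRing R] [NonUnitalRing D] (RG : GammaRing G R) (DG : GammaRing G D)
    {I : Type w} (σ : I → Γ) : Prop :=
  ∃ φ : R →+ (I →₀ I →₀ D), Function.Injective φ ∧
    (∀ (a b : R) (i j : I), φ (a * b) i j = matMulEntry (φ a) (φ b) i j) ∧
    ∀ γ : Γ, (fun r : R => φ r) '' (RG.grade γ : Set R)
      = {m : I →₀ I →₀ D | ∀ i j : I, m i j ∈ entryGrade G DG σ γ i j}

/-- Entry constraint for matrix rings indexed by a sequence of subsets of `Γ`: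
the component `D_{Σ_i γ Σ_j⁻¹}`. -/
def entryGradeSet {Γ : Type u} (G : Gpd Γ) {D : Type v} [NonUnitalRing D]
    (DG : GammaRing G D) {I : Type w} (Sig : I → Set Γ) (γ : Γ) (i j : I) :
    AddSubgroup D :=
  ⨆ (σ : Γ) (_ : σ ∈ Sig i) (τ : Γ) (_ : τ ∈ Sig j), (G.conj? σ γ τ).elim ⊥ DG.grade

/-- `R` is gr-isomorphic to the graded matrix ring `M_I(D)(Σ̄)` for a sequence of
subsets `Σ̄`. -/
def GammaRing.GrRepMatrixSet {Γ : Type u} {G : Gpd Γ} {R : Type v} {D : Type x}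
    [NonUnitalRing R] [NonUnitalRing D] (RG : GammaRing G R) (DG : GammaRing G D)
    {I : Type w} (Sig : I → Set Γ) : Prop :=
  ∃ φ : R →+ (I →₀ I →₀ D), Function.Injective φ ∧
    (∀ (a b : R) (i j : I), φ (a * b) i j = matMulEntry (φ a) (φ b) i j) ∧
    ∀ γ : Γ, (fun r : R => φ r) '' (RG.grade γ : Set R)
      = {m : I →₀ I →₀ D | ∀ i j : I, m i j ∈ entryGradeSet G DG Sig γ i j}

/-- The family of graded rings `Rj` is summable. -/
def SummableFam {Γ : Type u} {G : Gpd Γ} {J : Type w} (Rj : J → BRing.{u, x} G) : Prop :=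
  ∀ e : Γ, G.IsObj e → {j : J | (Rj j).str.grade e ≠ ⊥}.Finite

/-- `P` (with projections `π`) is the graded direct product `∏^gr_j R_j`. -/
def IsGradedProductB {Γ : Type u} {G : Gpd Γ} {J : Type w} (Rj : J → BRing.{u, x} G)
    {P : Type v} [NonUnitalRing P] (PG : GammaRing G P)
    (π : ∀ j, P →+ (Rj j).carrier) : Prop :=
  (∀ (j : J) (a b : P), π j (a * b) = π j a * π j b) ∧
  (∀ (j : J) (e : Γ), G.IsObj e → π j (PG.one e) = (Rj j).str.one e) ∧
  ∀ (γ : Γ) (xs : ∀ j, (Rj j).carrier), (∀ j, xs j ∈ (Rj j).str.grade γ) →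
    ∃! p : P, p ∈ PG.grade γ ∧ ∀ j, π j p = xs j

/-- `R` and `S` are gr-isomorphic graded rings. -/
def GrIso {Γ : Type u} {G : Gpd Γ} {R : Type v} {S : Type x}
    [NonUnitalRing R] [NonUnitalRing S] (RG : GammaRing G R) (SG : GammaRing G S) :
    Prop :=
  ∃ φ : R ≃+ S, (∀ a b : R, φ (a * b) = φ a * φ b) ∧
    (∀ e : Γ, G.IsObj e → φ (RG.one e) = SG.one e) ∧
    ∀ γ : Γ, (fun a : R => φ a) '' (RG.grade γ : Set R) = (SG.grade γ : Set S)

/-- The gr-primality relation: `1_e D 1_f ≠ 0`. -/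
def GrPrimRel {Γ : Type u} (G : Gpd Γ) {D : Type v} [NonUnitalRing D]
    (DG : GammaRing G D) (e f : Γ) : Prop :=
  ∃ x : D, DG.one e * x * DG.one f ≠ 0

/-- The graded ideal `D_{[e]}` attached to the `∼`-class of `e`. -/
def ClassIdeal {Γ : Type u} (G : Gpd Γ) {D : Type v} [NonUnitalRing D]
    (DG : GammaRing G D) (e : Γ) : AddSubgroup D :=
  ⨆ (γ : Γ) (_ : GrPrimRel G DG (G.tgt γ) e ∧ GrPrimRel G DG (G.src γ) e), DG.grade γ

end
universe u v w x y

/-!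
If `R` is a graded division ring and `0 ≠ a ∈ R_γ`, then `a a⁻¹ = 1_{r(γ)}`, so `aR = R(r(γ))`;
this gives (2) and, since `R = ⊕_γ R_γ`, the gr-semisimplicity in (3). Conversely, a
homogeneous right inverse of `a` is automatically two-sided, and one is found by writing
`1_{r(γ)} = a b + c` with `b ∈ R_{γ⁻¹}`: under (2) `aR = R(r(γ))` and `c = 0`; under (3) `aR`
has a graded complement `C ∋ c` (Zorn), then `c a = a - a b a ∈ aR ∩ C = 0`, and `a b ≠ 0` is
invertible in the division ring `R_{r(γ)}`.
For (4), the objects joined by morphisms of `supp(R)` fall into equivalence classes; the sum of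
the components `R_γ` with `d(γ)` in one class is a gr-prime graded division ring, and distinct
classes give orthogonal summands with disjoint supports.
-/

namespace Gpd

variable {Γ : Type u} (G : Gpd Γ)

theorem isObj_src (γ : Γ) : G.IsObj (G.src γ) := G.src_src γ

theorem isObj_tgt (γ : Γ) : G.IsObj (G.tgt γ) := G.src_tgt γ

variable {G}

theorem IsObj.tgt_eq {e : Γ} (he : G.IsObj e) : G.tgt e = e := by
  rw [← he, G.tgt_src]

theorem comp_of_eq_tgt {x δ : Γ} (hx : x = G.tgt δ) (h : G.src x = G.tgt δ) :
    G.comp x δ h = δ := by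
  subst hx; exact G.id_comp δ

theorem comp_of_eq_src {γ x : Γ} (hx : x = G.src γ) (h : G.src γ = G.tgt x) :
    G.comp γ x h = γ := by
  subst hx; exact G.comp_id γ

theorem IsObj.inv_eq {e : Γ} (he : G.IsObj e) : G.inv e = e :=
  calc G.inv e = G.comp (G.inv e) e (G.src_inv e) :=
        (comp_of_eq_src (by rw [G.src_inv, he.tgt_eq]) _).symm
    _ = G.src e := G.inv_comp e
    _ = e := he

theorem inv_comp_comp {γ δ : Γ} (h : G.src γ = G.tgt δ)
    (h' : G.src (G.inv γ) = G.tgt (G.comp γ δ h)) :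
    G.comp (G.inv γ) (G.comp γ δ h) h' = δ := by
  rw [← G.comp_assoc (G.inv γ) γ δ (G.src_inv γ) h]
  have key : ∀ x (hx : x = G.comp (G.inv γ) γ (G.src_inv γ)) (hc : G.src x = G.tgt δ),
      G.comp x δ hc = δ := fun x hx hc =>
    comp_of_eq_tgt (hx.trans ((G.inv_comp γ).trans h)) hc
  exact key _ rfl _

theorem comp_left_cancel {γ δ δ' : Γ} (h : G.src γ = G.tgt δ) (h' : G.src γ = G.tgt δ')
    (heq : G.comp γ δ h = G.comp γ δ' h') : δ = δ' := by
  have hinv : G.src (G.inv γ) = G.tgt (G.comp γ δ h) := by rw [G.src_inv, G.tgt_comp]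
  rw [← inv_comp_comp h hinv, ← inv_comp_comp h' (heq ▸ hinv)]
  congr 1

theorem exists_comp_eq_of_tgt_eq {γ η : Γ} (h : G.tgt η = G.tgt γ) :
    ∃ (δ : Γ) (hc : G.src γ = G.tgt δ), G.comp γ δ hc = η := by
  have hc : G.src (G.inv γ) = G.tgt η := by rw [G.src_inv, h]
  refine ⟨G.comp (G.inv γ) η hc, by rw [G.tgt_comp, G.tgt_inv], ?_⟩
  rw [← G.comp_assoc]
  have key : ∀ x (hx : x = G.comp γ (G.inv γ) (G.tgt_inv γ).symm) (hc : G.src x = G.tgt η),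
      G.comp x η hc = η := fun x hx hc =>
    comp_of_eq_tgt (hx.trans ((G.comp_inv γ).trans h.symm)) hc
  exact key _ rfl _

end Gpd

theorem AddSubgroup.exists_mem_ne_zero_of_le_iSup_inf {ι M : Type*} [AddCommGroup M]
    {ℳ : ι → AddSubgroup M} {N : AddSubgroup M} (hN : N ≤ ⨆ i, ℳ i ⊓ N) (hN0 : N ≠ ⊥) :
    ∃ i, ∃ x ∈ ℳ i, x ∈ N ∧ x ≠ 0 := by
  by_contra! h
  exact hN0 (eq_bot_iff.mpr (hN.trans (iSup_le fun i x hx => (h i x hx.1 hx.2 :))))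

theorem iSupIndep.of_mem_biSup {ι M : Type*} [AddCommGroup M] {ℳ : ι → AddSubgroup M}
    (hℳ : iSupIndep ℳ) {p : ι → Prop} {i : ι} {x : M} (hx : x ∈ ℳ i) (h0 : x ≠ 0)
    (hp : x ∈ ⨆ (j) (_ : p j), ℳ j) : p i := by
  by_contra hi
  exact h0 (AddSubgroup.disjoint_def.mp (hℳ.disjoint_biSup (y := {j | p j}) hi) hx hp)

theorem biSup_le_iSup_inf_biSup {ι α : Type*} [CompleteLattice α] (ℳ : ι → α) (p : ι → Prop) :
    ⨆ (i) (_ : p i), ℳ i ≤ ⨆ i, ℳ i ⊓ ⨆ (j) (_ : p j), ℳ j :=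
  iSup₂_le fun i hi => le_iSup_of_le i (le_inf le_rfl (le_iSup₂_of_le i hi le_rfl))

namespace DirectSum

variable {ι M : Type*} [DecidableEq ι] [AddCommGroup M]

theorem isInternal_addSubgroup_of_iSup_eq_top {ℳ : ι → AddSubgroup M}
    (hsup : ⨆ i, ℳ i = ⊤) (hindep : ∀ i, ℳ i ⊓ ⨆ (j) (_ : j ≠ i), ℳ j = ⊥) :
    IsInternal ℳ :=
  isInternal_submodule_of_iSupIndep_of_iSup_eq_top (A := AddSubgroup.toIntSubmodule ∘ ℳ)
    ((iSupIndep_map_orderIso_iff _).mpr (iSupIndep_def.mpr fun i => disjoint_iff.mpr (hindep i)))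
    (by rw [Function.comp_def, ← AddSubgroup.toIntSubmodule.map_iSup, hsup]; rfl)

variable (ℳ : ι → AddSubgroup M) [Decomposition ℳ]

theorem isHomogeneous_iff_le_iSup_inf (N : AddSubgroup M) :
    SetLike.IsHomogeneous ℳ N ↔ N ≤ ⨆ i, ℳ i ⊓ N := by
  classical
  refine ⟨fun hN x hx => ?_, fun hN i => ?_⟩
  · rw [← sum_support_decompose ℳ x]
    exact sum_mem fun i _ => AddSubgroup.mem_iSup_of_mem i ⟨(decompose ℳ x i).2, hN i hx⟩
  · intro x hx
    refine AddSubgroup.iSup_induction (fun j => ℳ j ⊓ N) (C := fun y => (decompose ℳ y i : M) ∈ N)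
      (hN hx) (fun j y hy => ?_) ?_ ?_
    · by_cases hji : j = i
      · subst hji; rw [decompose_of_mem_same ℳ hy.1]; exact hy.2
      · rw [decompose_of_mem_ne ℳ hy.1 hji]; exact zero_mem N
    · simp
    · intro y z hy hz; simpa using add_mem hy hz

theorem mem_biSup_iff (p : ι → Prop) (x : M) :
    x ∈ ⨆ (i) (_ : p i), ℳ i ↔ ∀ i, ¬ p i → (decompose ℳ x i : M) = 0 := by
  classical
  refine ⟨fun hx i hi => ?_, fun hx => ?_⟩
  · refine AddSubgroup.iSup_induction (fun j => ⨆ (_ : p j), ℳ j)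
      (C := fun y => (decompose ℳ y i : M) = 0) hx (fun j y hy => ?_) ?_ ?_
    · by_cases hj : p j
      · rw [iSup_pos hj] at hy
        exact decompose_of_mem_ne ℳ hy fun hji => hi (hji ▸ hj)
      · rw [iSup_neg hj, AddSubgroup.mem_bot] at hy
        simp [hy]
    · simp
    · intro y z hy hz; simp only [decompose_add, add_apply, AddSubgroup.coe_add, hy, hz, add_zero]
  · rw [← sum_support_decompose ℳ x]
    refine sum_mem fun i _ => ?_
    by_cases hi : p i
    · exact AddSubgroup.mem_iSup_of_mem i (AddSubgroup.mem_iSup_of_mem hi (decompose ℳ x i).2)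
    · rw [hx i hi]; exact zero_mem _

theorem disjoint_biSup_biSup_not (p : ι → Prop) :
    Disjoint (⨆ (i) (_ : p i), ℳ i) (⨆ (i) (_ : ¬ p i), ℳ i) := by
  classical
  rw [disjoint_iff, eq_bot_iff]
  intro x hx
  obtain ⟨hp, hnp⟩ := AddSubgroup.mem_inf.mp hx
  rw [mem_biSup_iff] at hp hnp
  rw [AddSubgroup.mem_bot, ← sum_support_decompose ℳ x]
  exact Finset.sum_eq_zero fun i _ => if hi : p i then hnp i (not_not_intro hi) else hp i hi

theorem decompose_mem_iSup_inf {J : Type*} {A : J → AddSubgroup M}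
    (hA : ∀ j, SetLike.IsHomogeneous ℳ (A j)) {x : M} (hx : x ∈ ⨆ j, A j) (i : ι) :
    (decompose ℳ x i : M) ∈ ⨆ j, ℳ i ⊓ A j := by
  refine AddSubgroup.iSup_induction A (C := fun y => (decompose ℳ y i : M) ∈ ⨆ j, ℳ i ⊓ A j) hx
    (fun j y hy => ?_) ?_ ?_
  · exact AddSubgroup.mem_iSup_of_mem j ⟨(decompose ℳ y i).2, hA j i hy⟩
  · simp
  · intro y z hy hz; simpa using add_mem hy hz

end DirectSum

open DirectSum

namespace GammaMod

variable {Γ : Type u} {G : Gpd Γ} {R : Type v} [NonUnitalRing R] {RG : GammaRing G R}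
  {M : Type w} [AddCommGroup M] (Mod : GammaMod RG M)

noncomputable instance decomposition [DecidableEq Γ] : Decomposition Mod.grade :=
  (isInternal_addSubgroup_of_iSup_eq_top Mod.grade_iSup Mod.grade_indep).chooseDecomposition

theorem zero_smul (a : R) : Mod.smul 0 a = 0 := by
  have h := Mod.add_smul 0 0 a
  rw [add_zero] at h
  exact left_eq_add.mp h

theorem isGradedSub_bot : Mod.IsGradedSub ⊥ :=
  ⟨fun m hm a => by rw [AddSubgroup.mem_bot.mp hm, Mod.zero_smul]; exact zero_mem _, bot_le⟩

variable {Mod}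

theorem IsGradedSub.sup {N P : AddSubgroup M} (hN : Mod.IsGradedSub N)
    (hP : Mod.IsGradedSub P) : Mod.IsGradedSub (N ⊔ P) := by
  refine ⟨fun m hm a => ?_, sup_le ?_ ?_⟩
  · obtain ⟨n, hn, p, hp, rfl⟩ := AddSubgroup.mem_sup.mp hm
    rw [Mod.add_smul]
    exact add_mem (AddSubgroup.mem_sup_left (hN.1 n hn a)) (AddSubgroup.mem_sup_right (hP.1 p hp a))
  · exact hN.2.trans (iSup_mono fun γ => inf_le_inf_left _ le_sup_left)
  · exact hP.2.trans (iSup_mono fun γ => inf_le_inf_left _ le_sup_right)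

theorem IsGradedSub.inf {N P : AddSubgroup M} (hN : Mod.IsGradedSub N)
    (hP : Mod.IsGradedSub P) : Mod.IsGradedSub (N ⊓ P) := by
  classical
  refine ⟨fun m hm a => ⟨hN.1 m hm.1 a, hP.1 m hm.2 a⟩, ?_⟩
  have hN' := (isHomogeneous_iff_le_iSup_inf Mod.grade N).mpr hN.2
  have hP' := (isHomogeneous_iff_le_iSup_inf Mod.grade P).mpr hP.2
  exact (isHomogeneous_iff_le_iSup_inf Mod.grade _).mp fun γ m hm => ⟨hN' γ hm.1, hP' γ hm.2⟩

theorem isGradedSub_sSup_of_directedOn {S : Set (AddSubgroup M)} (hne : S.Nonempty)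
    (hdir : DirectedOn (· ≤ ·) S) (hS : ∀ N ∈ S, Mod.IsGradedSub N) :
    Mod.IsGradedSub (sSup S) := by
  refine ⟨fun m hm a => ?_, fun m hm => ?_⟩ <;>
    obtain ⟨N, hNS, hmN⟩ := (AddSubgroup.mem_sSup_of_directedOn hne hdir).mp hm
  · exact AddSubgroup.mem_sSup_of_mem hNS ((hS N hNS).1 m hmN a)
  · exact iSup_mono (fun γ => inf_le_inf_left _ (le_sSup hNS)) ((hS N hNS).2 hmN)

theorem exists_isGradedSub_isCompl (hM : Mod.IsGrSemisimple) {A : AddSubgroup M}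
    (hA : Mod.IsGradedSub A) : ∃ C, Mod.IsGradedSub C ∧ IsCompl A C := by
  let S : Set (AddSubgroup M) := {C | Mod.IsGradedSub C ∧ Disjoint A C}
  have hchain : ∀ c ⊆ S, IsChain (· ≤ ·) c → ∀ y ∈ c, ∃ ub ∈ S, ∀ z ∈ c, z ≤ ub := by
    intro c hcS hc y hy
    refine ⟨sSup c, ⟨isGradedSub_sSup_of_directedOn ⟨y, hy⟩ hc.directedOn fun N hN => (hcS hN).1,
      AddSubgroup.disjoint_def.mpr fun {x} hxA hx => ?_⟩, fun z hz => le_sSup hz⟩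
    obtain ⟨N, hNc, hxN⟩ := (AddSubgroup.mem_sSup_of_directedOn ⟨y, hy⟩ hc.directedOn).mp hx
    exact AddSubgroup.disjoint_def.mp (hcS hNc).2 hxA hxN
  obtain ⟨C, -, ⟨hCgr, hAC⟩, hCmax⟩ :=
    zorn_le_nonempty₀ S hchain ⊥ ⟨Mod.isGradedSub_bot, disjoint_bot_right⟩
  refine ⟨C, hCgr, hAC, codisjoint_iff.mpr (eq_top_iff.mpr ?_)⟩
  rw [← hM]
  refine iSup₂_le fun N hN => ?_
  -- `N ⊓ (A ⊔ C)` is `N` or `0`; in the second case `C ⊔ N` still meets `A` trivially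
  -- (modularity), so maximality of `C` forces `N ≤ C`.
  rcases hN.2.2 _ (hN.1.inf (hA.sup hCgr)) inf_le_left with hbot | heq
  · have hCN : C ⊔ N ∈ S :=
      ⟨hCgr.sup hN.1, hAC.disjoint_sup_right_of_disjoint_sup_left
        (disjoint_iff.mpr (inf_comm N _ ▸ hbot))⟩
    exact (le_sup_right.trans (hCmax hCN le_sup_left)).trans le_sup_right
  · exact heq ▸ inf_le_right

end GammaMod

theorem AddSubgroup.mul_mem_of_mem_biSup {R : Type*} [NonUnitalNonAssocRing R] {ι κ : Type*}
    {p : ι → Prop} {q : κ → Prop} {X : ι → AddSubgroup R} {Y : κ → AddSubgroup R}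
    {W : AddSubgroup R} (h : ∀ i, p i → ∀ j, q j → ∀ a ∈ X i, ∀ b ∈ Y j, a * b ∈ W) {x y : R}
    (hx : x ∈ ⨆ (i) (_ : p i), X i) (hy : y ∈ ⨆ (j) (_ : q j), Y j) : x * y ∈ W := by
  rw [iSup_subtype'] at hx hy
  refine AddSubgroup.iSup_induction _ (C := fun x => x * y ∈ W) hx (fun i a ha => ?_) (by simp)
    fun a a' ha ha' => by rw [add_mul]; exact add_mem ha ha'
  refine AddSubgroup.iSup_induction _ (C := fun y => a * y ∈ W) hy (fun j b hb => ?_) (by simp)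
    fun b b' hb hb' => by rw [mul_add]; exact add_mem hb hb'
  exact h i i.2 j j.2 a ha b hb

namespace GammaRing

variable {Γ : Type u} {G : Gpd Γ} {R : Type v} [NonUnitalRing R] (RG : GammaRing G R)

noncomputable instance decomposition [DecidableEq Γ] : Decomposition RG.grade :=
  (isInternal_addSubgroup_of_iSup_eq_top RG.grade_iSup RG.grade_indep).chooseDecomposition

theorem iSupIndep_grade : iSupIndep RG.grade :=
  iSupIndep_def.mpr fun γ => disjoint_iff.mpr (RG.grade_indep γ)

variable {RG}

theorem one_tgt_ne_zero {γ : Γ} {a : R} (ha : a ∈ RG.grade γ) (h0 : a ≠ 0) :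
    RG.one (G.tgt γ) ≠ 0 :=
  fun h => h0 (by rw [← RG.one_mul' γ a ha, h, zero_mul])

theorem mul_mem_grade_of_mem_src {γ : Γ} {a b : R} (ha : a ∈ RG.grade γ)
    (hb : b ∈ RG.grade (G.src γ)) : a * b ∈ RG.grade γ :=
  G.comp_id γ ▸ RG.mul_mem _ _ (G.tgt_src γ).symm a b ha hb

theorem mul_mem_grade_tgt {γ : Γ} {a b : R} (ha : a ∈ RG.grade γ)
    (hb : b ∈ RG.grade (G.inv γ)) : a * b ∈ RG.grade (G.tgt γ) :=
  G.comp_inv γ ▸ RG.mul_mem _ _ (G.tgt_inv γ).symm a b ha hb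

theorem decompose_mul_left [DecidableEq Γ] {γ δ : Γ} {a : R} (ha : a ∈ RG.grade γ)
    (h : G.src γ = G.tgt δ) (x : R) :
    (decompose RG.grade (a * x) (G.comp γ δ h) : R) = a * decompose RG.grade x δ := by
  induction x using Decomposition.inductionOn RG.grade with
  | zero => simp
  | @homogeneous τ y =>
    by_cases hτ : τ = δ
    · subst hτ
      rw [decompose_of_mem_same _ y.2, decompose_of_mem_same _ (RG.mul_mem _ _ h a y ha y.2)]
    rw [decompose_of_mem_ne _ y.2 hτ, mul_zero]
    by_cases hc : G.src γ = G.tgt τ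
    · exact decompose_of_mem_ne _ (RG.mul_mem _ _ hc a y ha y.2)
        fun heq => hτ (G.comp_left_cancel hc h heq)
    · rw [RG.mul_ne γ τ hc a y ha y.2]; simp
  | add x y hx hy =>
    simp only [mul_add, decompose_add, DirectSum.add_apply, AddSubgroup.coe_add, hx, hy]

theorem isGrDivision_of_exists_right_inv (hR : ∃ a : R, a ≠ 0)
    (H : ∀ (γ : Γ) (a : R), a ∈ RG.grade γ → a ≠ 0 →
      ∃ b ∈ RG.grade (G.inv γ), a * b = RG.one (G.tgt γ)) :
    RG.IsGrDivision := by
  refine ⟨hR, fun γ a ha h0 => ?_⟩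
  obtain ⟨b, hb, hab⟩ := H γ a ha h0
  have hb0 : b ≠ 0 := fun h => one_tgt_ne_zero ha h0 (by rw [← hab, h, mul_zero])
  obtain ⟨c, hc, hbc⟩ := H (G.inv γ) b hb hb0
  rw [G.inv_inv] at hc
  rw [G.tgt_inv] at hbc
  have hca : c = a :=
    calc c = a * b * c := by rw [hab, RG.one_mul' γ c hc]
      _ = a := by rw [mul_assoc, hbc, RG.mul_one' γ a ha]
  exact ⟨b, hb, hab, hca ▸ hbc⟩

theorem mul_ne_zero_of_isGrDivision (hdiv : RG.IsGrDivision) {γ δ : Γ} {a b : R}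
    (ha : a ∈ RG.grade γ) (hb : b ∈ RG.grade δ) (ha0 : a ≠ 0) (hb0 : b ≠ 0)
    (h : G.src γ = G.tgt δ) : a * b ≠ 0 := by
  obtain ⟨c, -, -, hca⟩ := hdiv.2 γ a ha ha0
  intro hab
  apply hb0
  rw [← RG.one_mul' δ b hb, ← h, ← hca, mul_assoc, hab, mul_zero]

theorem mem_eComp {γ e : Γ} (hγ : G.tgt γ = e) {a : R} (ha : a ∈ RG.grade γ) :
    a ∈ RG.regular.eComp e :=
  AddSubgroup.mem_iSup_of_mem γ (AddSubgroup.mem_iSup_of_mem hγ ha)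

theorem mul_mem_eComp {e : Γ} {x : R} (hx : x ∈ RG.regular.eComp e) (r : R) :
    x * r ∈ RG.regular.eComp e := by
  have hr : r ∈ ⨆ (δ : Γ) (_ : True), RG.grade δ := by simp [RG.grade_iSup]
  refine AddSubgroup.mul_mem_of_mem_biSup (fun γ hγ δ _ a ha b hb => ?_) hx hr
  by_cases hc : G.src γ = G.tgt δ
  · exact mem_eComp (by rw [G.tgt_comp, hγ]) (RG.mul_mem γ δ hc a b ha hb)
  · rw [RG.mul_ne γ δ hc a b ha hb]; exact zero_mem _

theorem isGradedSub_eComp (e : Γ) : RG.regular.IsGradedSub (RG.regular.eComp e) :=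
  ⟨fun _ hx r => mul_mem_eComp hx r, biSup_le_iSup_inf_biSup _ _⟩

theorem range_mulLeft_le_eComp {γ : Γ} {a : R} (ha : a ∈ RG.grade γ) :
    (AddMonoidHom.mulLeft a).range ≤ RG.regular.eComp (G.tgt γ) := by
  rintro _ ⟨r, rfl⟩
  exact mul_mem_eComp (mem_eComp rfl ha) r

theorem isGradedSub_range_mulLeft {γ : Γ} {a : R} (ha : a ∈ RG.grade γ) :
    RG.regular.IsGradedSub (AddMonoidHom.mulLeft a).range := by
  classical
  refine ⟨?_, (isHomogeneous_iff_le_iSup_inf RG.grade _).mp ?_⟩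
  · rintro _ ⟨s, rfl⟩ r
    exact ⟨s * r, (mul_assoc a s r).symm⟩
  rintro η _ ⟨r, rfl⟩
  by_cases hη : G.tgt η = G.tgt γ
  · obtain ⟨δ, hc, rfl⟩ := G.exists_comp_eq_of_tgt_eq hη
    exact ⟨_, (decompose_mul_left ha hc r).symm⟩
  · rw [(mem_biSup_iff RG.grade _ _).mp (range_mulLeft_le_eComp ha ⟨r, rfl⟩) η hη]
    exact zero_mem _

theorem exists_homogeneous_mul_add_eq_one {γ : Γ} {a : R} (ha : a ∈ RG.grade γ) {C : AddSubgroup R}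
    (hC : C ≤ ⨆ η, RG.grade η ⊓ C) {b c : R} (hc : c ∈ C)
    (h : a * b + c = RG.one (G.tgt γ)) :
    ∃ b' ∈ RG.grade (G.inv γ), ∃ c' ∈ C, a * b' + c' = RG.one (G.tgt γ) := by
  classical
  have hone : (decompose RG.grade (a * b + c) (G.tgt γ) : R) = RG.one (G.tgt γ) := by
    rw [h]; exact decompose_of_mem_same _ (RG.one_mem _ (G.isObj_tgt γ))
  have hab := decompose_mul_left ha (G.tgt_inv γ).symm b
  rw [G.comp_inv] at hab
  rw [decompose_add, DirectSum.add_apply, AddSubgroup.coe_add, hab] at hone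
  exact ⟨_, (decompose RG.grade b _).2, _,
    (isHomogeneous_iff_le_iSup_inf RG.grade C).mpr hC _ hc, hone⟩

theorem mem_range_mulLeft_self {γ : Γ} {a : R} (ha : a ∈ RG.grade γ) :
    a ∈ (AddMonoidHom.mulLeft a).range :=
  ⟨RG.one (G.src γ), RG.mul_one' γ a ha⟩

theorem IsGrDivision.isGrSimpleSub_eComp (hdiv : RG.IsGrDivision) {e : Γ}
    (hne : RG.regular.eComp e ≠ ⊥) : RG.regular.IsGrSimpleSub (RG.regular.eComp e) := by
  refine ⟨isGradedSub_eComp e, hne, fun P hP hPe => or_iff_not_imp_left.mpr fun hP0 => ?_⟩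
  obtain ⟨γ, p, hpγ, hpP, hp0⟩ := AddSubgroup.exists_mem_ne_zero_of_le_iSup_inf hP.2 hP0
  have hγ : G.tgt γ = e := RG.iSupIndep_grade.of_mem_biSup (p := (G.tgt · = e)) hpγ hp0 (hPe hpP)
  obtain ⟨b, -, hpb, -⟩ := hdiv.2 γ p hpγ hp0
  have hone : RG.one e ∈ P := hγ ▸ hpb ▸ hP.1 p hpP b
  refine le_antisymm hPe (iSup₂_le fun δ hδ y hy => ?_)
  rw [← RG.one_mul' δ y hy, hδ]
  exact hP.1 _ hone y

theorem IsGrDivision.isGamma0Simple (hdiv : RG.IsGrDivision) : RG.regular.IsGamma0Simple :=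
  ⟨hdiv.1, fun _ _ hne => hdiv.isGrSimpleSub_eComp hne⟩

theorem isGrDivision_of_isGamma0Simple (hsimple : RG.regular.IsGamma0Simple) :
    RG.IsGrDivision := by
  refine isGrDivision_of_exists_right_inv hsimple.1 fun γ a ha h0 => ?_
  have hne : RG.regular.eComp (G.tgt γ) ≠ ⊥ := fun hbot =>
    h0 (AddSubgroup.mem_bot.mp (hbot ▸ mem_eComp rfl ha))
  rcases (hsimple.2 _ (G.isObj_tgt γ) hne).2.2 _ (isGradedSub_range_mulLeft ha)
    (range_mulLeft_le_eComp ha) with hbot | heq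
  · exact absurd (AddSubgroup.mem_bot.mp (hbot ▸ mem_range_mulLeft_self ha)) h0
  obtain ⟨b, hb⟩ : RG.one (G.tgt γ) ∈ (AddMonoidHom.mulLeft a).range :=
    heq ▸ mem_eComp (G.isObj_tgt γ).tgt_eq (RG.one_mem _ (G.isObj_tgt γ))
  obtain ⟨b', hb', c', hc', hbc'⟩ :=
    exists_homogeneous_mul_add_eq_one ha bot_le (zero_mem ⊥) ((add_zero (a * b)).trans hb)
  exact ⟨b', hb', by rwa [AddSubgroup.mem_bot.mp hc', add_zero] at hbc'⟩

theorem IsGrDivision.isRightGrSemisimple (hdiv : RG.IsGrDivision) : RG.IsRightGrSemisimple := by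
  refine eq_top_iff.mpr (RG.grade_iSup ▸ iSup_le fun γ => ?_)
  have hγle : RG.grade γ ≤ RG.regular.eComp (G.tgt γ) := fun _ => mem_eComp rfl
  by_cases hγ : RG.regular.eComp (G.tgt γ) = ⊥
  · exact hγle.trans (hγ ▸ bot_le)
  · exact hγle.trans (le_iSup₂ (f := fun N (_ : RG.regular.IsGrSimpleSub N) => N) _
      (hdiv.isGrSimpleSub_eComp hγ))

theorem IsGrDivision.componentDivisionRing (hdiv : RG.IsGrDivision) {e : Γ} (he : G.IsObj e)
    (h1e : RG.one e ≠ 0) : RG.ComponentDivisionRing e := by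
  refine ⟨h1e, fun a ha h0 => ?_⟩
  obtain ⟨b, hb, hab, hba⟩ := hdiv.2 e a ha h0
  rw [he.inv_eq] at hb
  rw [he.tgt_eq] at hab
  rw [he] at hba
  exact ⟨b, hb, hab, hba⟩

theorem isGrDivision_of_isRightGrSemisimple (hR : ∃ a : R, a ≠ 0)
    (hss : RG.IsRightGrSemisimple)
    (hcomp : ∀ e : Γ, G.IsObj e → RG.one e ≠ 0 → RG.ComponentDivisionRing e) :
    RG.IsGrDivision := by
  refine isGrDivision_of_exists_right_inv hR fun γ a ha h0 => ?_
  obtain ⟨C, hC, hcompl⟩ := GammaMod.exists_isGradedSub_isCompl hss (isGradedSub_range_mulLeft ha)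
  obtain ⟨_, ⟨b₀, rfl⟩, c₀, hc₀, h₀⟩ :=
    AddSubgroup.mem_sup.mp (hcompl.sup_eq_top ▸ AddSubgroup.mem_top (RG.one (G.tgt γ)))
  obtain ⟨b, hb, c, hc, hbc⟩ := exists_homogeneous_mul_add_eq_one ha hC.2 hc₀ h₀
  have haba : a * b * a = a := by
    have hca : c * a = a - a * b * a := by
      rw [eq_sub_of_add_eq' hbc, sub_mul, RG.one_mul' γ a ha]
    have hcaR : c * a ∈ (AddMonoidHom.mulLeft a).range :=
      ⟨RG.one (G.src γ) - b * a, by simp [hca, mul_sub, RG.mul_one' γ a ha, mul_assoc]⟩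
    have := AddSubgroup.disjoint_def.mp hcompl.disjoint hcaR (hC.1 c hc a)
    rw [hca, sub_eq_zero] at this
    exact this.symm
  have hab0 : a * b ≠ 0 := fun h => h0 (by rw [← haba, h, zero_mul])
  obtain ⟨s, hs, habs, -⟩ :=
    (hcomp _ (G.isObj_tgt γ) (one_tgt_ne_zero ha h0)).2 _ (mul_mem_grade_tgt ha hb) hab0
  exact ⟨b * s, mul_mem_grade_of_mem_src hb (G.src_inv γ ▸ hs), by rw [← mul_assoc, habs]⟩

variable (RG)

/- For a graded division ring, `Linked` is the relation `∼` of the paper (`GrPrimRel`, read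
through homogeneous components) and `linkClass e` is the ideal `R_{[e]}` (`ClassIdeal`). -/
def Linked (e f : Γ) : Prop :=
  ∃ γ, ∃ a ∈ RG.grade γ, a ≠ 0 ∧ G.src γ = e ∧ G.tgt γ = f

def linkClass (e : Γ) : AddSubgroup R :=
  ⨆ (γ : Γ) (_ : RG.Linked (G.src γ) e), RG.grade γ

variable {RG}

theorem linked_of_mem {γ : Γ} {a : R} (ha : a ∈ RG.grade γ) (h0 : a ≠ 0) :
    RG.Linked (G.src γ) (G.tgt γ) :=
  ⟨γ, a, ha, h0, rfl, rfl⟩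

theorem Linked.symm (hdiv : RG.IsGrDivision) {e f : Γ} (h : RG.Linked e f) : RG.Linked f e := by
  obtain ⟨γ, a, ha, h0, rfl, rfl⟩ := h
  obtain ⟨b, hb, hab, -⟩ := hdiv.2 γ a ha h0
  have hb0 : b ≠ 0 := fun h => one_tgt_ne_zero ha h0 (by rw [← hab, h, mul_zero])
  exact ⟨G.inv γ, b, hb, hb0, G.src_inv γ, G.tgt_inv γ⟩

theorem Linked.trans (hdiv : RG.IsGrDivision) {e f g : Γ} (hef : RG.Linked e f)
    (hfg : RG.Linked f g) : RG.Linked e g := by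
  obtain ⟨γ, a, ha, ha0, rfl, rfl⟩ := hef
  obtain ⟨δ, b, hb, hb0, hδ, rfl⟩ := hfg
  exact ⟨G.comp δ γ hδ, b * a, RG.mul_mem δ γ hδ b a hb ha,
    mul_ne_zero_of_isGrDivision hdiv hb ha hb0 ha0 hδ, G.src_comp δ γ hδ, G.tgt_comp δ γ hδ⟩

theorem linked_src_self (hdiv : RG.IsGrDivision) {γ : Γ} {a : R} (ha : a ∈ RG.grade γ)
    (h0 : a ≠ 0) : RG.Linked (G.src γ) (G.src γ) :=
  (linked_of_mem ha h0).trans hdiv ((linked_of_mem ha h0).symm hdiv)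

theorem grade_le_linkClass {γ e : Γ} (h : RG.Linked (G.src γ) e) :
    RG.grade γ ≤ RG.linkClass e :=
  le_iSup₂ (f := fun γ (_ : RG.Linked (G.src γ) e) => RG.grade γ) γ h

theorem linked_of_mem_linkClass {γ e : Γ} {a : R} (ha : a ∈ RG.grade γ) (h0 : a ≠ 0)
    (hae : a ∈ RG.linkClass e) : RG.Linked (G.src γ) e :=
  RG.iSupIndep_grade.of_mem_biSup (p := fun δ => RG.Linked (G.src δ) e) ha h0 hae

theorem linkClass_eq (hdiv : RG.IsGrDivision) {e f : Γ} (h : RG.Linked e f) :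
    RG.linkClass e = RG.linkClass f :=
  le_antisymm (iSup₂_le fun _ hγ => grade_le_linkClass (hγ.trans hdiv h))
    (iSup₂_le fun _ hγ => grade_le_linkClass (hγ.trans hdiv (h.symm hdiv)))

theorem mul_mem_linkClass {e : Γ} {x y : R} (hx : x ∈ RG.linkClass e)
    (hy : y ∈ RG.linkClass e) : x * y ∈ RG.linkClass e := by
  refine AddSubgroup.mul_mem_of_mem_biSup (fun γ _ δ hδ a ha b hb => ?_) hx hy
  by_cases hc : G.src γ = G.tgt δ
  · exact grade_le_linkClass ((G.src_comp γ δ hc).symm ▸ hδ) (RG.mul_mem γ δ hc a b ha hb)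
  · rw [RG.mul_ne γ δ hc a b ha hb]; exact zero_mem _

theorem mul_eq_zero_of_not_linked (hdiv : RG.IsGrDivision) {e f : Γ} (hef : ¬ RG.Linked e f)
    {x y : R} (hx : x ∈ RG.linkClass e) (hy : y ∈ RG.linkClass f) : x * y = 0 := by
  refine AddSubgroup.mem_bot.mp
    (AddSubgroup.mul_mem_of_mem_biSup (fun γ hγ δ hδ a ha b hb => ?_) hx hy)
  by_cases hc : G.src γ = G.tgt δ
  · rw [AddSubgroup.mem_bot]
    by_contra hab
    have hb0 : b ≠ 0 := fun h => hab (by rw [h, mul_zero])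
    have hδe : RG.Linked (G.tgt δ) e := hc ▸ hγ
    exact hef ((hδe.symm hdiv).trans hdiv (((linked_of_mem hb hb0).symm hdiv).trans hdiv hδ))
  · rw [RG.mul_ne γ δ hc a b ha hb]; exact zero_mem _

theorem exists_ne_zero_mem_linkClass {e : Γ} (he : RG.Linked e e) :
    ∃ a ∈ RG.linkClass e, a ≠ 0 := by
  obtain ⟨γ, a, ha, h0, hsrc, -⟩ := id he
  exact ⟨a, grade_le_linkClass (by rwa [hsrc]) ha, h0⟩

theorem subringGrDivision_linkClass (hdiv : RG.IsGrDivision) {e : Γ} (he : RG.Linked e e) :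
    RG.SubringGrDivision (RG.linkClass e) := by
  refine ⟨exists_ne_zero_mem_linkClass he, fun γ a ha hae h0 => ?_⟩
  have hsrc : RG.Linked (G.src γ) e := linked_of_mem_linkClass ha h0 hae
  have htgt : RG.Linked (G.tgt γ) e := ((linked_of_mem ha h0).symm hdiv).trans hdiv hsrc
  obtain ⟨b, hb, hab, hba⟩ := hdiv.2 γ a ha h0
  refine ⟨grade_le_linkClass ((G.src_tgt γ).symm ▸ htgt) (RG.one_mem _ (G.isObj_tgt γ)),
    grade_le_linkClass ((G.src_src γ).symm ▸ hsrc) (RG.one_mem _ (G.isObj_src γ)),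
    b, hb, grade_le_linkClass ((G.src_inv γ).symm ▸ htgt) hb, hab, hba⟩

theorem subringGrPrime_linkClass (hdiv : RG.IsGrDivision) {e : Γ} (he : RG.Linked e e) :
    RG.SubringGrPrime (RG.linkClass e) := by
  refine ⟨exists_ne_zero_mem_linkClass he, fun P Q hP hQ hP0 hQ0 => ?_⟩
  obtain ⟨γ, p, hp, hpP, hp0⟩ := AddSubgroup.exists_mem_ne_zero_of_le_iSup_inf hP.2.2 hP0
  obtain ⟨δ, q, hq, hqQ, hq0⟩ := AddSubgroup.exists_mem_ne_zero_of_le_iSup_inf hQ.2.2 hQ0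
  have htδ : RG.Linked (G.tgt δ) e :=
    ((linked_of_mem hq hq0).symm hdiv).trans hdiv (linked_of_mem_linkClass hq hq0 (hQ.1 hqQ))
  -- a nonzero `c` of degree `tgt δ → src γ` gives `p c q ≠ 0`
  obtain ⟨μ, c, hc, hc0, hμs, hμt⟩ : RG.Linked (G.tgt δ) (G.src γ) :=
    htδ.trans hdiv ((linked_of_mem_linkClass hp hp0 (hP.1 hpP)).symm hdiv)
  have hcN : c ∈ RG.linkClass e := grade_le_linkClass (hμs ▸ htδ) hc
  have hpc0 : p * c ≠ 0 := mul_ne_zero_of_isGrDivision hdiv hp hc hp0 hc0 hμt.symm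
  exact ⟨p * c, (hP.2.1 p hpP c hcN).1, q, hqQ, mul_ne_zero_of_isGrDivision hdiv
    (RG.mul_mem _ _ hμt.symm p c hp hc) hq hpc0 hq0 (by rw [G.src_comp, hμs])⟩

theorem linkClass_le_biSup_not_linked (hdiv : RG.IsGrDivision) {e f : Γ}
    (hef : RG.linkClass f ≠ RG.linkClass e) :
    RG.linkClass f ≤ ⨆ (γ : Γ) (_ : ¬ RG.Linked (G.src γ) e), RG.grade γ :=
  iSup₂_le fun γ hγ => le_iSup₂_of_le (f := fun γ (_ : ¬ RG.Linked (G.src γ) e) => RG.grade γ) γ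
    (fun hγe => hef (linkClass_eq hdiv ((hγ.symm hdiv).trans hdiv hγe))) le_rfl

theorem IsGrDivision.exists_linkClass_decomposition (hdiv : RG.IsGrDivision) :
    ∃ (J : Type v) (A : J → AddSubgroup R),
      (∀ j, (∀ a ∈ A j, ∀ b ∈ A j, a * b ∈ A j) ∧
        A j ≤ (⨆ γ : Γ, (RG.grade γ ⊓ A j)) ∧
        RG.SubringGrDivision (A j) ∧ RG.SubringGrPrime (A j)) ∧
      (∀ j k, j ≠ k → ∀ γ : Γ, RG.grade γ ⊓ A j = ⊥ ∨ RG.grade γ ⊓ A k = ⊥) ∧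
      (∀ j k, j ≠ k → ∀ a ∈ A j, ∀ b ∈ A k, a * b = 0) ∧
      (⨆ j, A j) = ⊤ ∧
      (∀ j, A j ⊓ (⨆ (k : J) (_ : k ≠ j), A k) = ⊥) := by
  refine ⟨Set.range fun e : {e // RG.Linked e e} => RG.linkClass e, Subtype.val,
    ?_, ?_, ?_, ?_, ?_⟩
  · rintro ⟨_, ⟨e, he⟩, rfl⟩
    exact ⟨fun _ hx _ hy => mul_mem_linkClass hx hy, biSup_le_iSup_inf_biSup _ _,
      subringGrDivision_linkClass hdiv he, subringGrPrime_linkClass hdiv he⟩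
  · rintro ⟨_, ⟨e, -⟩, rfl⟩ ⟨_, ⟨f, -⟩, rfl⟩
    intro hjk γ
    rcases (RG.grade γ ⊓ RG.linkClass e).bot_or_exists_ne_zero with he | ⟨a, ⟨ha, hae⟩, ha0⟩
    · exact Or.inl he
    rcases (RG.grade γ ⊓ RG.linkClass f).bot_or_exists_ne_zero with hf | ⟨b, ⟨hb, hbf⟩, hb0⟩
    · exact Or.inr hf
    have hef : RG.Linked e f := ((linked_of_mem_linkClass ha ha0 hae).symm hdiv).trans hdiv
      (linked_of_mem_linkClass hb hb0 hbf)
    exact absurd (Subtype.ext (linkClass_eq hdiv hef)) hjk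
  · rintro ⟨_, ⟨e, -⟩, rfl⟩ ⟨_, ⟨f, -⟩, rfl⟩
    intro hjk a ha b hb
    exact mul_eq_zero_of_not_linked hdiv
      (fun hef => hjk (Subtype.ext (linkClass_eq hdiv hef))) ha hb
  · refine eq_top_iff.mpr (RG.grade_iSup ▸ iSup_le fun γ a ha => ?_)
    by_cases h0 : a = 0
    · exact h0 ▸ zero_mem _
    exact AddSubgroup.mem_iSup_of_mem ⟨_, ⟨G.src γ, linked_src_self hdiv ha h0⟩, rfl⟩
      (grade_le_linkClass (linked_src_self hdiv ha h0) ha)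
  · classical
    rintro ⟨_, ⟨e, -⟩, rfl⟩
    refine ((disjoint_biSup_biSup_not RG.grade _).mono_right (iSup₂_le ?_)).eq_bot
    rintro ⟨_, ⟨f, -⟩, rfl⟩
    intro hkj
    exact linkClass_le_biSup_not_linked hdiv fun h => hkj (Subtype.ext h)

theorem isGrDivision_of_decomposition (hR : ∃ a : R, a ≠ 0) {J : Type*} {A : J → AddSubgroup R}
    (hgr : ∀ j, A j ≤ ⨆ γ : Γ, RG.grade γ ⊓ A j) (hdiv : ∀ j, RG.SubringGrDivision (A j))
    (hdisj : ∀ j k, j ≠ k → ∀ γ : Γ, RG.grade γ ⊓ A j = ⊥ ∨ RG.grade γ ⊓ A k = ⊥)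
    (hsup : ⨆ j, A j = ⊤) : RG.IsGrDivision := by
  classical
  refine ⟨hR, fun γ a ha h0 => ?_⟩
  have haA : a ∈ ⨆ j, RG.grade γ ⊓ A j := decompose_of_mem_same RG.grade ha ▸
    decompose_mem_iSup_inf RG.grade (fun j => (isHomogeneous_iff_le_iSup_inf _ _).mpr (hgr j))
      (hsup ▸ AddSubgroup.mem_top a) γ
  obtain ⟨j₀, hj₀⟩ : ∃ j₀, RG.grade γ ⊓ A j₀ ≠ ⊥ := by
    by_contra! h
    exact h0 (AddSubgroup.mem_bot.mp (iSup_le (fun j => (h j).le) haA))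
  have hle : ⨆ j, RG.grade γ ⊓ A j ≤ A j₀ := iSup_le fun j => by
    by_cases hj : j = j₀
    · exact hj ▸ inf_le_right
    · exact ((hdisj j j₀ hj γ).resolve_right hj₀).le.trans bot_le
  obtain ⟨-, -, b, hb, -, hab, hba⟩ := (hdiv j₀).2 γ a ha (hle haA) h0
  exact ⟨b, hb, hab, hba⟩

end GammaRing

/-- characterizations of graded division rings.
For a nonzero object unital `Γ`-graded ring `R` the following are equivalent:
(1) `R` is a `Γ`-graded division ring;
(2) `R_R` is a `Γ₀`-simple right `R`-module;
(3) `R` is right gr-semisimple and `R_e` is a division ring for every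
    `e ∈ Γ'₀(R)`;
(4) `R` is the direct sum of a family of gr-prime `Γ`-graded division rings with
    pairwise disjoint supports. -/
theorem graded_division_ring_tfae
    {Γ : Type u} (G : Gpd Γ) {R : Type v} [NonUnitalRing R] (RG : GammaRing G R)
    (hR : ∃ a : R, a ≠ 0) :
    [RG.IsGrDivision,
     RG.regular.IsGamma0Simple,
     RG.IsRightGrSemisimple ∧
       ∀ e : Γ, G.IsObj e → RG.one e ≠ 0 → RG.ComponentDivisionRing e,
     ∃ (J : Type v) (A : J → AddSubgroup R),
       (∀ j, (∀ a ∈ A j, ∀ b ∈ A j, a * b ∈ A j) ∧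
         A j ≤ (⨆ γ : Γ, (RG.grade γ ⊓ A j)) ∧
         RG.SubringGrDivision (A j) ∧ RG.SubringGrPrime (A j)) ∧
       (∀ j k, j ≠ k → ∀ γ : Γ, RG.grade γ ⊓ A j = ⊥ ∨ RG.grade γ ⊓ A k = ⊥) ∧
       (∀ j k, j ≠ k → ∀ a ∈ A j, ∀ b ∈ A k, a * b = 0) ∧
       (⨆ j, A j) = ⊤ ∧
       (∀ j, A j ⊓ (⨆ (k : J) (_ : k ≠ j), A k) = ⊥)].TFAE := by
  tfae_have 1 → 2 := GammaRing.IsGrDivision.isGamma0Simple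
  tfae_have 2 → 1 := GammaRing.isGrDivision_of_isGamma0Simple
  tfae_have 1 → 3 := fun h =>
    ⟨h.isRightGrSemisimple, fun _ he h1e => h.componentDivisionRing he h1e⟩
  tfae_have 3 → 1 := fun ⟨hss, hcomp⟩ =>
    GammaRing.isGrDivision_of_isRightGrSemisimple hR hss hcomp
  tfae_have 1 → 4 := GammaRing.IsGrDivision.exists_linkClass_decomposition
  tfae_have 4 → 1 := fun ⟨_, _, hA, hdisj, _, hsup, _⟩ =>
    GammaRing.isGrDivision_of_decomposition hR (fun j => (hA j).2.1) (fun j => (hA j).2.2.1)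
      hdisj hsup
  tfae_finish
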